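/- Let C° be a ⊞-closed subclass of the complete pin class P° satisfying the adjacency condition, with enumeration sequence C_n. Then C_{m+n} ≥ C_{m−1}·C_{n−1} for all m, n ≥ 1. -/

import Mathlib

/-- A *centred permutation*: `vals` is the one-line notation of the filled-in
permutation (length `n+1`), `origin` the index of the origin point. -/
structure CPerm where
  vals : List ℕ
  origin : ℕ
deriving DecidableEq

namespace CPerm

/-- Length of a centred permutation (origin does not count). -/
def len (p : CPerm) : ℕ := p.vals.length - 1

/-- A genuine centred permutation: one-line notation is a permutation of
`{0, …, N-1}` and the origin index is in range. -/
def IsValid (p : CPerm) : Prop :=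
  p.vals ≠ [] ∧ p.origin < p.vals.length ∧ p.vals.Perm (List.range p.vals.length)

def valAt (p : CPerm) (i : ℕ) : ℕ := p.vals.getD i 0

def originVal (p : CPerm) : ℕ := p.valAt p.origin

/-- The box-sum `p ⊞ q`: inflate the origin of `q` by a copy of `p`. -/
def boxSum (p q : CPerm) : CPerm :=
  let N := p.vals.length
  let v := q.originVal
  let shift : ℕ → ℕ := fun u => if u < v then u else u + (N - 1)
  ⟨(q.vals.take q.origin).map shift ++ p.vals.map (· + v) ++
      (q.vals.drop (q.origin + 1)).map shift,
    q.origin + p.origin⟩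

/-- The trivial centred permutation (origin only, length 0). -/
def trivial : CPerm := ⟨[0], 0⟩

/-- Iterated box-sum `σ₁ ⊞ σ₂ ⊞ ⋯ ⊞ σₙ`. -/
def boxSumList (l : List CPerm) : CPerm := l.foldr boxSum trivial

/-- `p` is ⊞-indecomposable: nonempty and not a box-sum of two strictly smaller
centred permutations. -/
def BoxIndecomposable (p : CPerm) : Prop :=
  1 ≤ p.len ∧
    ¬∃ a b : CPerm, a.IsValid ∧ b.IsValid ∧ 1 ≤ a.len ∧ 1 ≤ b.len ∧ boxSum a b = p

/-- The non-origin point at index `i` of `p` lies in quadrant `q` (1–4,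
numbered anticlockwise). -/
def InQuadrant (p : CPerm) (q : ℕ) (i : ℕ) : Prop :=
  i < p.vals.length ∧ i ≠ p.origin ∧
    ((q = 1 ∧ p.origin < i ∧ p.originVal < p.valAt i) ∨
     (q = 2 ∧ i < p.origin ∧ p.originVal < p.valAt i) ∨
     (q = 3 ∧ i < p.origin ∧ p.valAt i < p.originVal) ∨
     (q = 4 ∧ p.origin < i ∧ p.valAt i < p.originVal))

/-- All non-origin points of `p` lie in quadrant `q`. -/
def OneQuadrant (p : CPerm) (q : ℕ) : Prop :=
  ∀ i, i < p.vals.length → i ≠ p.origin → InQuadrant p q i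

def OppositeQuadrants (q₁ q₂ : ℕ) : Prop :=
  (q₁ = 1 ∧ q₂ = 3) ∨ (q₁ = 3 ∧ q₂ = 1) ∨ (q₁ = 2 ∧ q₂ = 4) ∨ (q₁ = 4 ∧ q₂ = 2)

/-- Centred pattern containment `p ≤ q` (origins must match up). -/
def PatternLE (p q : CPerm) : Prop :=
  ∃ f : ℕ → ℕ,
    (∀ i j, i < p.vals.length → j < p.vals.length → i < j → f i < f j) ∧
    (∀ i, i < p.vals.length → f i < q.vals.length) ∧
    f p.origin = q.origin ∧
    (∀ i j, i < p.vals.length → j < p.vals.length →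
      (p.valAt i < p.valAt j ↔ q.valAt (f i) < q.valAt (f j)))

/-- A centred permutation class: nonempty, consisting of valid centred
permutations, and downward closed under centred containment. -/
def IsClass (S : Set CPerm) : Prop :=
  S.Nonempty ∧ (∀ p ∈ S, p.IsValid) ∧
    ∀ p q : CPerm, q ∈ S → p.IsValid → PatternLE p q → p ∈ S

/-- `S` is closed under the box-sum. -/
def BoxClosed (S : Set CPerm) : Prop := ∀ p ∈ S, ∀ q ∈ S, boxSum p q ∈ S

/-- Number of centred permutations of length `n` in `S`. -/
noncomputable def count (S : Set CPerm) (n : ℕ) : ℕ := {p | p ∈ S ∧ p.len = n}.ncard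

/-- The single-point centred permutation in quadrant `q`. -/
def mu : ℕ → CPerm
  | 1 => ⟨[0, 1], 0⟩
  | 2 => ⟨[1, 0], 1⟩
  | 3 => ⟨[0, 1], 1⟩
  | 4 => ⟨[1, 0], 0⟩
  | _ => ⟨[0], 0⟩

def AdjacentQuadrants (a b : ℕ) : Prop :=
  (a, b) = (1, 2) ∨ (a, b) = (2, 3) ∨ (a, b) = (3, 4) ∨ (a, b) = (4, 1) ∨
  (a, b) = (2, 1) ∨ (a, b) = (3, 2) ∨ (a, b) = (4, 3) ∨ (a, b) = (1, 4)

/-- The adjacency condition on a centred class. -/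
def AdjacencyCondition (S : Set CPerm) : Prop :=
  (∃! q : ℕ, q ∈ ({1, 2, 3, 4} : Set ℕ) ∧ mu q ∈ S) ∨
    ∃ a b : ℕ, AdjacentQuadrants a b ∧ mu a ∈ S ∧ mu b ∈ S

end CPerm

inductive PinLetter | u | d | l | r
deriving DecidableEq

def PinLetter.isVert : PinLetter → Bool
  | .u => true
  | .d => true
  | .l => false
  | .r => false

/-- Letters strictly alternate between vertical and horizontal alignment. -/
def PinAlt (ls : List PinLetter) : Prop :=
  List.Chain' (fun a b => a.isVert ≠ b.isVert) ls

/-- A pin word: an initial numeral `q ∈ {1,…,4}` followed by alternating letters. -/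
def IsPinWord (q : ℕ) (ls : List PinLetter) : Prop := 1 ≤ q ∧ q ≤ 4 ∧ PinAlt ls

def firstPt : ℕ → ℚ × ℚ
  | 1 => (1, 1)
  | 2 => (-1, 1)
  | 3 => (-1, -1)
  | 4 => (1, -1)
  | _ => (1, 1)

def maxOf (l : List ℚ) : ℚ := l.foldr max 0
def minOf (l : List ℚ) : ℚ := l.foldr min 0

/-- Place the next pin: beyond the bounding rectangle in the given direction,
separating the previous point from all the others. The list holds the points
newest-first; the origin `(0,0)` is the last entry. -/
def pinStep (pts : List (ℚ × ℚ)) (dir : PinLetter) : List (ℚ × ℚ) :=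
  let last := pts.headD (0, 0)
  let rest := pts.tail
  let btwY : ℚ :=
    if maxOf (rest.map Prod.snd) < last.2 then (last.2 + maxOf (rest.map Prod.snd)) / 2
    else (last.2 + minOf (rest.map Prod.snd)) / 2
  let btwX : ℚ :=
    if maxOf (rest.map Prod.fst) < last.1 then (last.1 + maxOf (rest.map Prod.fst)) / 2
    else (last.1 + minOf (rest.map Prod.fst)) / 2
  let np : ℚ × ℚ :=
    match dir with
    | .r => (maxOf (pts.map Prod.fst) + 1, btwY)
    | .l => (minOf (pts.map Prod.fst) - 1, btwY)
    | .u => (btwX, maxOf (pts.map Prod.snd) + 1)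
    | .d => (btwX, minOf (pts.map Prod.snd) - 1)
  np :: pts

/-- The points (newest first, origin last) drawn from a pin word. -/
def pinPts (q : ℕ) (ls : List PinLetter) : List (ℚ × ℚ) :=
  ls.foldl pinStep [firstPt q, (0, 0)]

/-- Convert a finite set of plane points (with origin `(0,0)`) into a centred
permutation in canonical form. -/
def toCPerm (pts : List (ℚ × ℚ)) : CPerm :=
  ⟨(pts.mergeSort (fun a b => decide (a.1 ≤ b.1))).map
      (fun pt => ((pts.map Prod.snd).filter (fun y => decide (y < pt.2))).length),
    ((pts.map Prod.fst).filter (fun x => decide (x < 0))).length⟩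

/-- The centred pin permutation of a pin word. -/
def pinPerm (q : ℕ) (ls : List PinLetter) : CPerm := toCPerm (pinPts q ls)

/-- The complete pin class `P°`: the downward closure of all box-sums of
centred pin permutations. -/
def CompletePinClass : Set CPerm :=
  {p | p.IsValid ∧
    ∃ ws : List (ℕ × List PinLetter), (∀ w ∈ ws, IsPinWord w.1 w.2) ∧
      CPerm.PatternLE p (CPerm.boxSumList (ws.map fun w => pinPerm w.1 w.2))}

/-- An infinite pin sequence: numeral `q` and letters `f 0, f 1, …`,
alternating in alignment. -/
def IsPinSeq (q : ℕ) (f : ℕ → PinLetter) : Prop :=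
  1 ≤ q ∧ q ≤ 4 ∧ ∀ n, (f n).isVert ≠ (f (n + 1)).isVert

def seqPrefix (f : ℕ → PinLetter) (n : ℕ) : List PinLetter := (List.range n).map f

/-- The pin class of an infinite pin sequence. -/
def PinClassOf (q : ℕ) (f : ℕ → PinLetter) : Set CPerm :=
  {p | p.IsValid ∧ ∃ n : ℕ, CPerm.PatternLE p (pinPerm q (seqPrefix f n))}

/-- The `i`-th point (`i ≥ 1`) placed when drawing the pin sequence. -/
def seqPoint (q : ℕ) (f : ℕ → PinLetter) (i : ℕ) : ℚ × ℚ :=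
  (pinPts q (seqPrefix f (i - 1))).headD (0, 0)

/-- The quadrant of a plane point. -/
def quadOf (pt : ℚ × ℚ) : ℕ :=
  if 0 < pt.1 then (if 0 < pt.2 then 1 else 4) else (if 0 < pt.2 then 2 else 3)

/-- The pin word `w` is the pin factor of the sequence starting at position `i ≥ 1`
(first letter replaced by the quadrant of the corresponding point). -/
def FactorAt (q : ℕ) (f : ℕ → PinLetter) (i : ℕ) (w : ℕ × List PinLetter) : Prop :=
  1 ≤ i ∧ w.1 = quadOf (seqPoint q f i) ∧
    ∀ t, t < w.2.length → w.2.getD t PinLetter.u = f (i - 1 + t)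

/-- A recurrent pin factor: one occurring arbitrarily late. -/
def RecurrentFactor (q : ℕ) (f : ℕ → PinLetter) (w : ℕ × List PinLetter) : Prop :=
  ∀ N : ℕ, ∃ i, N ≤ i ∧ FactorAt q f i w

/-- The ⊞-interior of a pin class: the ⊞-closure (as a class) of the
permutations generated by recurrent pin factors. -/
def BoxInterior (q : ℕ) (f : ℕ → PinLetter) : Set CPerm :=
  {p | p.IsValid ∧
    ∃ l : List CPerm,
      (∀ x ∈ l, ∃ w : ℕ × List PinLetter, RecurrentFactor q f w ∧ x = pinPerm w.1 w.2) ∧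
      CPerm.PatternLE p (CPerm.boxSumList l)}

namespace CPerm

lemma boxSum_origin (p q : CPerm) : (boxSum p q).origin = q.origin + p.origin := rfl
lemma boxSum_vals (p q : CPerm) : (boxSum p q).vals =
    (q.vals.take q.origin).map (fun u => if u < q.originVal then u else u + (p.vals.length - 1))
      ++ (p.vals.map (· + q.originVal) ++
      (q.vals.drop (q.origin + 1)).map (fun u => if u < q.originVal then u else u + (p.vals.length - 1))) := by
  simp [boxSum]
lemma getD_boxSum_mid (g q : CPerm) (hk : q.origin ≤ q.vals.length) {t : ℕ}
    (ht : t < g.vals.length) :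
    (boxSum g q).vals.getD (q.origin + t) 0 = g.vals.getD t 0 + q.originVal := by
  rw [boxSum_vals, List.getD_append_right, List.getD_append]
  · rw [List.length_map, List.length_take, min_eq_left hk]
    simp only [Nat.add_sub_cancel_left]
    rw [List.getD_eq_getElem _ _ (by simpa using ht), List.getElem_map,
      List.getD_eq_getElem _ _ ht]
  · rw [List.length_map, List.length_take, min_eq_left hk]
    simpa [Nat.add_sub_cancel_left] using ht
  · rw [List.length_map, List.length_take, min_eq_left hk]; omega

lemma shift_injective (v N : ℕ) :
    Function.Injective (fun u => if u < v then u else u + (N - 1)) := by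
  intro a b hab
  simp only at hab
  split_ifs at hab <;> omega

lemma M1 {g g' q q' : CPerm} (hq : q.origin < q.vals.length) (hq' : q'.origin < q'.vals.length)
    (hg : g.vals.length = g'.vals.length)
    (hk : q.origin = q'.origin) (hv : q.originVal = q'.originVal)
    (h : boxSum g q = boxSum g' q') : g = g' ∧ q = q' := by
  have hvals : (boxSum g q).vals = (boxSum g' q').vals := by rw [h]
  have horig : (boxSum g q).origin = (boxSum g' q').origin := by rw [h]
  rw [boxSum_vals, boxSum_vals] at hvals
  have hlenA : ((q.vals.take q.origin).map
      (fun u => if u < q.originVal then u else u + (g.vals.length - 1))).length =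
      ((q'.vals.take q'.origin).map
      (fun u => if u < q'.originVal then u else u + (g'.vals.length - 1))).length := by
    simp only [List.length_map, List.length_take]
    omega
  obtain ⟨hA, hrest⟩ := List.append_inj hvals hlenA
  have hlenM : (g.vals.map (· + q.originVal)).length = (g'.vals.map (· + q'.originVal)).length := by
    simp [hg]
  obtain ⟨hM, hB⟩ := List.append_inj hrest hlenM
  have hgv : g.vals = g'.vals := by
    rw [hv] at hM
    exact List.map_injective_iff.mpr (fun a b hab => by simpa using hab) hM
  have hgo : g.origin = g'.origin := by
    rw [boxSum_origin, boxSum_origin, hk] at horig; omega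
  have hgeq : g = g' := by cases g; cases g'; simp_all
  refine ⟨hgeq, ?_⟩
  rw [hv, hk, hg] at hA hB
  have htake : q.vals.take q'.origin = q'.vals.take q'.origin :=
    List.map_injective_iff.mpr (shift_injective _ _) hA
  have hdrop : q.vals.drop (q'.origin + 1) = q'.vals.drop (q'.origin + 1) :=
    List.map_injective_iff.mpr (shift_injective _ _) hB
  have hvk : q.vals[q.origin]'hq = q'.vals[q'.origin]'hq' := by
    have h1 : q.vals.getD q.origin 0 = q'.vals.getD q'.origin 0 := hv
    rw [List.getD_eq_getElem _ _ hq, List.getD_eq_getElem _ _ hq'] at h1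
    exact h1
  have hqv : q.vals = q'.vals := by
    have e1 := List.take_append_drop q'.origin q.vals
    have e2 := List.take_append_drop q'.origin q'.vals
    rw [← e1, ← e2, htake]
    congr 1
    rw [List.drop_eq_getElem_cons (show q'.origin < q.vals.length by omega),
      List.drop_eq_getElem_cons hq', hdrop]
    congr 1
    rw [← List.getD_eq_getElem q.vals 0 (show q'.origin < q.vals.length by omega),
        ← List.getD_eq_getElem q'.vals 0 hq']
    conv_lhs => rw [← hk]
    exact hv
  cases q; cases q'; simp_all

lemma g12 (p : CPerm) {m : ℕ} (hm : p.vals.length = m) (h1 : 1 ≤ m) :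
    boxSum p ⟨[2,0,1],1⟩ = ⟨(m+1) :: (p.vals ++ [m]), 1 + p.origin⟩ := by
  simp [boxSum, originVal, valAt, hm]
  omega

lemma g43 (p : CPerm) {m : ℕ} (hm : p.vals.length = m) (h1 : 1 ≤ m) :
    boxSum p ⟨[0,2,1],1⟩ = ⟨0 :: (p.vals.map (· + 2) ++ [1]), 1 + p.origin⟩ := by
  simp [boxSum, originVal, valAt, hm]

lemma g23 (p : CPerm) {m : ℕ} (hm : p.vals.length = m) (h1 : 1 ≤ m) :
    boxSum p ⟨[0,2,1],2⟩ = ⟨0 :: (m+1) :: p.vals.map (· + 1), 2 + p.origin⟩ := by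
  simp [boxSum, originVal, valAt, hm]
  omega

lemma g41 (p : CPerm) {m : ℕ} (hm : p.vals.length = m) (h1 : 1 ≤ m) :
    boxSum p ⟨[1,0,2],0⟩ = ⟨p.vals.map (· + 1) ++ [0, m+1], p.origin⟩ := by
  simp [boxSum, originVal, valAt, hm]
  omega

lemma g11 (p : CPerm) {m : ℕ} (hm : p.vals.length = m) (h1 : 1 ≤ m) :
    boxSum p ⟨[0,1,2],0⟩ = ⟨p.vals ++ [m, m+1], p.origin⟩ := by
  simp [boxSum, originVal, valAt, hm]
  omega

lemma g22 (p : CPerm) {m : ℕ} (hm : p.vals.length = m) (h1 : 1 ≤ m) :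
    boxSum p ⟨[2,1,0],2⟩ = ⟨(m+1) :: m :: p.vals, 2 + p.origin⟩ := by
  simp [boxSum, originVal, valAt, hm]
  omega

lemma g33 (p : CPerm) {m : ℕ} (hm : p.vals.length = m) (h1 : 1 ≤ m) :
    boxSum p ⟨[0,1,2],2⟩ = ⟨0 :: 1 :: p.vals.map (· + 2), 2 + p.origin⟩ := by
  simp [boxSum, originVal, valAt, hm]

lemma g44 (p : CPerm) {m : ℕ} (hm : p.vals.length = m) (h1 : 1 ≤ m) :
    boxSum p ⟨[2,1,0],0⟩ = ⟨p.vals.map (· + 2) ++ [1, 0], p.origin⟩ := by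
  simp [boxSum, originVal, valAt, hm]

lemma IsValid.forall_lt {p : CPerm} (hp : p.IsValid) : ∀ x ∈ p.vals, x < p.vals.length :=
  fun x hx => by simpa using hp.2.2.mem_iff.mp hx

lemma getD_le_of_all {l : List ℕ} {c : ℕ} (h : ∀ x ∈ l, x ≤ c) (j : ℕ) : l.getD j 0 ≤ c := by
  rcases Nat.lt_or_ge j l.length with hj | hj
  · exact h _ (by rw [List.getD_eq_getElem _ _ hj]; exact List.getElem_mem _)
  · rw [List.getD_eq_default _ _ hj]; exact Nat.zero_le _

/-- key equation extractor -/
lemma key_eq {g g' q q' : CPerm} (hq : q.origin ≤ q.vals.length)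
    (hq' : q'.origin ≤ q'.vals.length)
    (h : boxSum g q = boxSum g' q') {d t : ℕ} (hd : q'.origin = q.origin + d)
    (ht1 : d ≤ t) (ht : t < g.vals.length) (ht' : t - d < g'.vals.length) :
    g.vals.getD t 0 + q.originVal = g'.vals.getD (t - d) 0 + q'.originVal := by
  have e1 := getD_boxSum_mid g q hq ht
  have e2 := getD_boxSum_mid g' q' hq' ht'
  rw [h, show q.origin + t = q'.origin + (t - d) by omega, e2] at e1
  exact e1.symm

lemma M2_12 {m : ℕ} (h1 : 1 ≤ m) {p p' q q' : CPerm}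
    (hp : p.IsValid) (hp' : p'.IsValid) (hq : q.IsValid) (hq' : q'.IsValid)
    (hpm : p.vals.length = m) (hpm' : p'.vals.length = m)
    (h : boxSum ⟨(m+1) :: (p.vals ++ [m]), 1 + p.origin⟩ q
       = boxSum ⟨(m+1) :: (p'.vals ++ [m]), 1 + p'.origin⟩ q')
    (hlt : q.origin < q'.origin) : False := by
  have hpo : p.origin < m := hpm ▸ hp.2.1
  have hpo' : p'.origin < m := hpm' ▸ hp'.2.1
  have horig : q.origin + (1 + p.origin) = q'.origin + (1 + p'.origin) := by
    have := congrArg origin h; simpa [boxSum_origin] using this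
  obtain ⟨d, hd⟩ : ∃ d, q'.origin = q.origin + (d + 1) := ⟨q'.origin - q.origin - 1, by omega⟩
  have hdm : d + 1 ≤ m - 1 := by omega
  have hL : ((m+1) :: (p.vals ++ [m])).length = m + 2 := by simp [hpm]
  have hL' : ((m+1) :: (p'.vals ++ [m])).length = m + 2 := by simp [hpm']
  -- equation at t = d+1
  have e1 := key_eq hq.2.1.le hq'.2.1.le h hd (le_refl (d+1))
    (by simp only [hL]; omega) (by simp only [hL']; omega)
  -- equation at t = m+1
  have e2 := key_eq hq.2.1.le hq'.2.1.le h hd (show d+1 ≤ m+1 by omega)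
    (by simp only [hL]; omega) (by simp only [hL']; omega)
  dsimp only at e1 e2
  simp only [Nat.add_sub_cancel, Nat.sub_self, List.getD_cons_succ, List.getD_cons_zero] at e1
  have hd1 : (p.vals ++ [m]).getD d 0 = p.vals.getD d 0 := by
    rw [List.getD_append]; omega
  have hd2 : p.vals.getD d 0 < m := by
    have := hp.forall_lt (p.vals.getD d 0)
      (by rw [List.getD_eq_getElem _ _ (show d < p.vals.length by omega)]
          exact List.getElem_mem _)
    omega
  rw [hd1] at e1
  -- getD at m+1 on LHS
  have hh : ((m+1) :: (p.vals ++ [m])).getD (m+1) 0 = m := by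
    rw [List.getD_cons_succ, List.getD_append_right]
    · simp [hpm]
    · omega
  rw [hh] at e2
  have hbound : ((m+1) :: (p'.vals ++ [m])).getD (m + 1 - (d+1)) 0 ≤ m + 1 := by
    apply getD_le_of_all
    intro x hx
    rcases List.mem_cons.mp hx with rfl | hx
    · omega
    rcases List.mem_append.mp hx with hx | hx
    · have := hp'.forall_lt x hx; omega
    · simp at hx; omega
  omega

lemma getD_map_add {l : List ℕ} {c j : ℕ} (hj : j < l.length) :
    (l.map (· + c)).getD j 0 = l.getD j 0 + c := by
  rw [List.getD_eq_getElem _ _ (by simpa using hj), List.getElem_map,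
    List.getD_eq_getElem _ _ hj]

lemma IsValid.getD_lt {p : CPerm} (hp : p.IsValid) {j : ℕ} (hj : j < p.vals.length) :
    p.vals.getD j 0 < p.vals.length := by
  have := hp.forall_lt (p.vals.getD j 0)
    (by rw [List.getD_eq_getElem _ _ hj]; exact List.getElem_mem _)
  exact this

lemma M2_43 {m : ℕ} (h1 : 1 ≤ m) {p p' q q' : CPerm}
    (hp : p.IsValid) (hp' : p'.IsValid) (hq : q.IsValid) (hq' : q'.IsValid)
    (hpm : p.vals.length = m) (hpm' : p'.vals.length = m)
    (h : boxSum ⟨0 :: (p.vals.map (· + 2) ++ [1]), 1 + p.origin⟩ q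
       = boxSum ⟨0 :: (p'.vals.map (· + 2) ++ [1]), 1 + p'.origin⟩ q')
    (hlt : q.origin < q'.origin) : False := by
  have hpo : p.origin < m := hpm ▸ hp.2.1
  have hpo' : p'.origin < m := hpm' ▸ hp'.2.1
  have horig : q.origin + (1 + p.origin) = q'.origin + (1 + p'.origin) := by
    have := congrArg origin h; simpa [boxSum_origin] using this
  obtain ⟨d, hd⟩ : ∃ d, q'.origin = q.origin + (d + 1) := ⟨q'.origin - q.origin - 1, by omega⟩
  have hdm : d + 1 ≤ m - 1 := by omega
  have hL : (0 :: (p.vals.map (· + 2) ++ [1])).length = m + 2 := by simp [hpm]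
  have hL' : (0 :: (p'.vals.map (· + 2) ++ [1])).length = m + 2 := by simp [hpm']
  have e1 := key_eq hq.2.1.le hq'.2.1.le h hd (le_refl (d+1))
    (by simp only [hL]; omega) (by simp only [hL']; omega)
  have e2 := key_eq hq.2.1.le hq'.2.1.le h hd (show d+1 ≤ m+1 by omega)
    (by simp only [hL]; omega) (by simp only [hL']; omega)
  dsimp only at e1 e2
  simp only [Nat.add_sub_cancel, Nat.sub_self, List.getD_cons_succ, List.getD_cons_zero] at e1
  have hd1 : (p.vals.map (· + 2) ++ [1]).getD d 0 = p.vals.getD d 0 + 2 := by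
    rw [List.getD_append] 
    · exact getD_map_add (by omega)
    · simp [hpm]; omega
  rw [hd1] at e1
  have hh : (0 :: (p.vals.map (· + 2) ++ [1])).getD (m+1) 0 = 1 := by
    rw [List.getD_cons_succ, List.getD_append_right]
    · simp [hpm]
    · simp [hpm]
  rw [hh] at e2
  have hbound : (0 :: (p'.vals.map (· + 2) ++ [1])).getD (m + 1 - (d+1)) 0 ≤ m + 1 := by
    apply getD_le_of_all
    intro x hx
    rcases List.mem_cons.mp hx with rfl | hx
    · omega
    rcases List.mem_append.mp hx with hx | hx
    · obtain ⟨y, hy, rfl⟩ := List.mem_map.mp hx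
      have := hp'.forall_lt y hy; omega
    · simp at hx; omega
  omega

lemma M2_23 {m : ℕ} (h1 : 1 ≤ m) {p p' q q' : CPerm}
    (hp : p.IsValid) (hp' : p'.IsValid) (hq : q.IsValid) (hq' : q'.IsValid)
    (hpm : p.vals.length = m) (hpm' : p'.vals.length = m)
    (h : boxSum ⟨0 :: (m+1) :: p.vals.map (· + 1), 2 + p.origin⟩ q
       = boxSum ⟨0 :: (m+1) :: p'.vals.map (· + 1), 2 + p'.origin⟩ q')
    (hlt : q.origin < q'.origin) : False := by
  have hpo : p.origin < m := hpm ▸ hp.2.1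
  have hpo' : p'.origin < m := hpm' ▸ hp'.2.1
  have horig : q.origin + (2 + p.origin) = q'.origin + (2 + p'.origin) := by
    have := congrArg origin h; simpa [boxSum_origin] using this
  obtain ⟨d, hd⟩ : ∃ d, q'.origin = q.origin + (d + 1) := ⟨q'.origin - q.origin - 1, by omega⟩
  have hdm : d + 1 ≤ m - 1 := by omega
  have hL : (0 :: (m+1) :: p.vals.map (· + 1)).length = m + 2 := by simp [hpm]
  have hL' : (0 :: (m+1) :: p'.vals.map (· + 1)).length = m + 2 := by simp [hpm']
  have e1 := key_eq hq.2.1.le hq'.2.1.le h hd (le_refl (d+1))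
    (by simp only [hL]; omega) (by simp only [hL']; omega)
  have e2 := key_eq hq.2.1.le hq'.2.1.le h hd (show d+1 ≤ d+2 by omega)
    (by simp only [hL]; omega) (by simp only [hL']; omega)
  dsimp only at e1 e2
  simp only [Nat.add_sub_cancel, Nat.sub_self, List.getD_cons_succ, List.getD_cons_zero] at e1
  rw [show d + 2 - (d+1) = 1 by omega] at e2
  simp only [List.getD_cons_succ, List.getD_cons_zero] at e2
  have hge : ((m+1) :: p.vals.map (· + 1)).getD d 0 ≥ 1 := by
    rcases Nat.eq_zero_or_pos d with rfl | hdpos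
    · simp
    · obtain ⟨e, rfl⟩ : ∃ e, d = e + 1 := ⟨d - 1, by omega⟩
      simp only [List.getD_cons_succ]
      rw [getD_map_add (by omega)]
      omega
  have hle : (p.vals.map (· + 1)).getD d 0 ≤ m := by
    rw [getD_map_add (by omega)]
    have := hp.getD_lt (j := d) (by omega)
    omega
  omega

lemma M2_41 {m : ℕ} (h1 : 1 ≤ m) {p p' q q' : CPerm}
    (hp : p.IsValid) (hp' : p'.IsValid) (hq : q.IsValid) (hq' : q'.IsValid)
    (hpm : p.vals.length = m) (hpm' : p'.vals.length = m)
    (h : boxSum ⟨p.vals.map (· + 1) ++ [0, m+1], p.origin⟩ q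
       = boxSum ⟨p'.vals.map (· + 1) ++ [0, m+1], p'.origin⟩ q')
    (hlt : q.origin < q'.origin) : False := by
  have hpo : p.origin < m := hpm ▸ hp.2.1
  have hpo' : p'.origin < m := hpm' ▸ hp'.2.1
  have horig : q.origin + p.origin = q'.origin + p'.origin := by
    have := congrArg origin h; simpa [boxSum_origin] using this
  obtain ⟨d, hd⟩ : ∃ d, q'.origin = q.origin + (d + 1) := ⟨q'.origin - q.origin - 1, by omega⟩
  have hdm : d + 1 ≤ m - 1 := by omega
  have hL : (p.vals.map (· + 1) ++ [0, m+1]).length = m + 2 := by simp [hpm]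
  have hL' : (p'.vals.map (· + 1) ++ [0, m+1]).length = m + 2 := by simp [hpm']
  have e1 := key_eq hq.2.1.le hq'.2.1.le h hd (show d+1 ≤ m by omega)
    (by simp only [hL]; omega) (by simp only [hL']; omega)
  have e2 := key_eq hq.2.1.le hq'.2.1.le h hd (show d+1 ≤ m+1 by omega)
    (by simp only [hL]; omega) (by simp only [hL']; omega)
  dsimp only at e1 e2
  have hm0 : (p.vals.map (· + 1) ++ [0, m+1]).getD m 0 = 0 := by
    rw [List.getD_append_right] <;> simp [hpm]
  have hm1 : (p.vals.map (· + 1) ++ [0, m+1]).getD (m+1) 0 = m+1 := by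
    rw [List.getD_append_right] <;> simp [hpm]
  rw [hm0] at e1
  rw [hm1] at e2
  have hge : (p'.vals.map (· + 1) ++ [0, m+1]).getD (m - (d+1)) 0 ≥ 1 := by
    rw [List.getD_append (h := by simp [hpm']; omega), getD_map_add (by omega)]
    omega
  have hle : (p'.vals.map (· + 1) ++ [0, m+1]).getD (m + 1 - (d+1)) 0 ≤ m + 1 := by
    apply getD_le_of_all
    intro x hx
    rcases List.mem_append.mp hx with hx | hx
    · obtain ⟨y, hy, rfl⟩ := List.mem_map.mp hx
      have := hp'.forall_lt y hy; omega
    · simp at hx; omega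
  omega

lemma veq {g g' q q' : CPerm} (hq : q.origin ≤ q.vals.length)
    (hq' : q'.origin ≤ q'.vals.length)
    (h : boxSum g q = boxSum g' q') (hk : q.origin = q'.origin)
    {t : ℕ} (ht : t < g.vals.length) (ht' : t < g'.vals.length)
    (hc : g.vals.getD t 0 = g'.vals.getD t 0) :
    q.originVal = q'.originVal := by
  have e := key_eq hq hq' h (d := 0) (by omega) (by omega) ht (by simpa using ht')
  simp only [Nat.sub_zero] at e
  omega

lemma add_inj (c : ℕ) : Function.Injective (· + c : ℕ → ℕ) := fun a b h => by simpa using h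

lemma cperm_ext {p p' : CPerm} (hv : p.vals = p'.vals) (ho : p.origin = p'.origin) : p = p' := by
  cases p; cases p'; simp_all

lemma INJ_12 {m : ℕ} (h1 : 1 ≤ m) {p p' q q' : CPerm}
    (hp : p.IsValid) (hp' : p'.IsValid) (hq : q.IsValid) (hq' : q'.IsValid)
    (hpm : p.vals.length = m) (hpm' : p'.vals.length = m)
    (h : boxSum (boxSum p ⟨[2,0,1],1⟩) q = boxSum (boxSum p' ⟨[2,0,1],1⟩) q') :
    p = p' ∧ q = q' := by
  rw [g12 p hpm h1, g12 p' hpm' h1] at h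
  have hk : q.origin = q'.origin := by
    rcases lt_trichotomy q.origin q'.origin with hlt | heq | hlt
    · exact absurd (M2_12 h1 hp hp' hq hq' hpm hpm' h hlt) id
    · exact heq
    · exact absurd (M2_12 h1 hp' hp hq' hq hpm' hpm h.symm hlt) id
  have hv : q.originVal = q'.originVal :=
    veq hq.2.1.le hq'.2.1.le h hk (t := 0) (by simp) (by simp) (by simp)
  obtain ⟨hg, hqq⟩ := M1 hq.2.1 hq'.2.1 (by simp [hpm, hpm']) hk hv h
  refine ⟨?_, hqq⟩
  have hgv : (m+1) :: (p.vals ++ [m]) = (m+1) :: (p'.vals ++ [m]) := congrArg vals hg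
  have hgo : 1 + p.origin = 1 + p'.origin := congrArg origin hg
  simp only [List.cons.injEq, true_and] at hgv
  exact cperm_ext (List.append_inj hgv (by simp [hpm, hpm'])).1 (by omega)

lemma INJ_43 {m : ℕ} (h1 : 1 ≤ m) {p p' q q' : CPerm}
    (hp : p.IsValid) (hp' : p'.IsValid) (hq : q.IsValid) (hq' : q'.IsValid)
    (hpm : p.vals.length = m) (hpm' : p'.vals.length = m)
    (h : boxSum (boxSum p ⟨[0,2,1],1⟩) q = boxSum (boxSum p' ⟨[0,2,1],1⟩) q') :
    p = p' ∧ q = q' := by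
  rw [g43 p hpm h1, g43 p' hpm' h1] at h
  have hk : q.origin = q'.origin := by
    rcases lt_trichotomy q.origin q'.origin with hlt | heq | hlt
    · exact absurd (M2_43 h1 hp hp' hq hq' hpm hpm' h hlt) id
    · exact heq
    · exact absurd (M2_43 h1 hp' hp hq' hq hpm' hpm h.symm hlt) id
  have hv : q.originVal = q'.originVal :=
    veq hq.2.1.le hq'.2.1.le h hk (t := 0) (by simp) (by simp) (by simp)
  obtain ⟨hg, hqq⟩ := M1 hq.2.1 hq'.2.1 (by simp [hpm, hpm']) hk hv h
  refine ⟨?_, hqq⟩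
  have hgv : 0 :: (p.vals.map (· + 2) ++ [1]) = 0 :: (p'.vals.map (· + 2) ++ [1]) :=
    congrArg vals hg
  have hgo : 1 + p.origin = 1 + p'.origin := congrArg origin hg
  simp only [List.cons.injEq, true_and] at hgv
  exact cperm_ext (List.map_injective_iff.mpr (add_inj 2)
    (List.append_inj hgv (by simp [hpm, hpm'])).1) (by omega)

lemma INJ_23 {m : ℕ} (h1 : 1 ≤ m) {p p' q q' : CPerm}
    (hp : p.IsValid) (hp' : p'.IsValid) (hq : q.IsValid) (hq' : q'.IsValid)
    (hpm : p.vals.length = m) (hpm' : p'.vals.length = m)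
    (h : boxSum (boxSum p ⟨[0,2,1],2⟩) q = boxSum (boxSum p' ⟨[0,2,1],2⟩) q') :
    p = p' ∧ q = q' := by
  rw [g23 p hpm h1, g23 p' hpm' h1] at h
  have hk : q.origin = q'.origin := by
    rcases lt_trichotomy q.origin q'.origin with hlt | heq | hlt
    · exact absurd (M2_23 h1 hp hp' hq hq' hpm hpm' h hlt) id
    · exact heq
    · exact absurd (M2_23 h1 hp' hp hq' hq hpm' hpm h.symm hlt) id
  have hv : q.originVal = q'.originVal :=
    veq hq.2.1.le hq'.2.1.le h hk (t := 0) (by simp) (by simp) (by simp)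
  obtain ⟨hg, hqq⟩ := M1 hq.2.1 hq'.2.1 (by simp [hpm, hpm']) hk hv h
  refine ⟨?_, hqq⟩
  have hgv : 0 :: (m+1) :: p.vals.map (· + 1) = 0 :: (m+1) :: p'.vals.map (· + 1) :=
    congrArg vals hg
  have hgo : 2 + p.origin = 2 + p'.origin := congrArg origin hg
  simp only [List.cons.injEq, true_and] at hgv
  exact cperm_ext (List.map_injective_iff.mpr (add_inj 1) hgv) (by omega)

lemma INJ_41 {m : ℕ} (h1 : 1 ≤ m) {p p' q q' : CPerm}
    (hp : p.IsValid) (hp' : p'.IsValid) (hq : q.IsValid) (hq' : q'.IsValid)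
    (hpm : p.vals.length = m) (hpm' : p'.vals.length = m)
    (h : boxSum (boxSum p ⟨[1,0,2],0⟩) q = boxSum (boxSum p' ⟨[1,0,2],0⟩) q') :
    p = p' ∧ q = q' := by
  rw [g41 p hpm h1, g41 p' hpm' h1] at h
  have hk : q.origin = q'.origin := by
    rcases lt_trichotomy q.origin q'.origin with hlt | heq | hlt
    · exact absurd (M2_41 h1 hp hp' hq hq' hpm hpm' h hlt) id
    · exact heq
    · exact absurd (M2_41 h1 hp' hp hq' hq hpm' hpm h.symm hlt) id
  have c1 : (p.vals.map (· + 1) ++ [0, m+1]).getD m 0 = 0 := by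
    rw [List.getD_append_right] <;> simp [hpm]
  have c2 : (p'.vals.map (· + 1) ++ [0, m+1]).getD m 0 = 0 := by
    rw [List.getD_append_right] <;> simp [hpm']
  have hc : (p.vals.map (· + 1) ++ [0, m+1]).getD m 0
      = (p'.vals.map (· + 1) ++ [0, m+1]).getD m 0 := by rw [c1, c2]
  have hv : q.originVal = q'.originVal :=
    veq hq.2.1.le hq'.2.1.le h hk (t := m) (by simp [hpm]) (by simp [hpm']) hc
  obtain ⟨hg, hqq⟩ := M1 hq.2.1 hq'.2.1 (by simp [hpm, hpm']) hk hv h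
  refine ⟨?_, hqq⟩
  have hgv : p.vals.map (· + 1) ++ [0, m+1] = p'.vals.map (· + 1) ++ [0, m+1] :=
    congrArg vals hg
  have hgo := congrArg origin hg
  exact cperm_ext (List.map_injective_iff.mpr (add_inj 1)
    (List.append_inj hgv (by simp [hpm, hpm'])).1) hgo

lemma INJ_s1 {m : ℕ} (h1 : 1 ≤ m) {p p' q q' : CPerm}
    (hq : q.IsValid) (hq' : q'.IsValid)
    (hpm : p.vals.length = m) (hpm' : p'.vals.length = m)
    (hk : q.origin = q'.origin) (hv : q.originVal = q'.originVal)
    (h : boxSum (boxSum p ⟨[0,1,2],0⟩) q = boxSum (boxSum p' ⟨[0,1,2],0⟩) q') :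
    p = p' ∧ q = q' := by
  rw [g11 p hpm h1, g11 p' hpm' h1] at h
  obtain ⟨hg, hqq⟩ := M1 hq.2.1 hq'.2.1 (by simp [hpm, hpm']) hk hv h
  refine ⟨?_, hqq⟩
  have hgv : p.vals ++ [m, m+1] = p'.vals ++ [m, m+1] := congrArg vals hg
  have hgo := congrArg origin hg
  exact cperm_ext (List.append_inj hgv (by simp [hpm, hpm'])).1 hgo

lemma INJ_s2 {m : ℕ} (h1 : 1 ≤ m) {p p' q q' : CPerm}
    (hq : q.IsValid) (hq' : q'.IsValid)
    (hpm : p.vals.length = m) (hpm' : p'.vals.length = m)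
    (hk : q.origin = q'.origin) (hv : q.originVal = q'.originVal)
    (h : boxSum (boxSum p ⟨[2,1,0],2⟩) q = boxSum (boxSum p' ⟨[2,1,0],2⟩) q') :
    p = p' ∧ q = q' := by
  rw [g22 p hpm h1, g22 p' hpm' h1] at h
  obtain ⟨hg, hqq⟩ := M1 hq.2.1 hq'.2.1 (by simp [hpm, hpm']) hk hv h
  refine ⟨?_, hqq⟩
  have hgv : (m+1) :: m :: p.vals = (m+1) :: m :: p'.vals := congrArg vals hg
  have hgo : 2 + p.origin = 2 + p'.origin := congrArg origin hg
  simp only [List.cons.injEq, true_and] at hgv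
  exact cperm_ext hgv (by omega)

lemma INJ_s3 {m : ℕ} (h1 : 1 ≤ m) {p p' q q' : CPerm}
    (hq : q.IsValid) (hq' : q'.IsValid)
    (hpm : p.vals.length = m) (hpm' : p'.vals.length = m)
    (hk : q.origin = q'.origin) (hv : q.originVal = q'.originVal)
    (h : boxSum (boxSum p ⟨[0,1,2],2⟩) q = boxSum (boxSum p' ⟨[0,1,2],2⟩) q') :
    p = p' ∧ q = q' := by
  rw [g33 p hpm h1, g33 p' hpm' h1] at h
  obtain ⟨hg, hqq⟩ := M1 hq.2.1 hq'.2.1 (by simp [hpm, hpm']) hk hv h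
  refine ⟨?_, hqq⟩
  have hgv : 0 :: 1 :: p.vals.map (· + 2) = 0 :: 1 :: p'.vals.map (· + 2) := congrArg vals hg
  have hgo : 2 + p.origin = 2 + p'.origin := congrArg origin hg
  simp only [List.cons.injEq, true_and] at hgv
  exact cperm_ext (List.map_injective_iff.mpr (add_inj 2) hgv) (by omega)

lemma INJ_s4 {m : ℕ} (h1 : 1 ≤ m) {p p' q q' : CPerm}
    (hq : q.IsValid) (hq' : q'.IsValid)
    (hpm : p.vals.length = m) (hpm' : p'.vals.length = m)
    (hk : q.origin = q'.origin) (hv : q.originVal = q'.originVal)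
    (h : boxSum (boxSum p ⟨[2,1,0],0⟩) q = boxSum (boxSum p' ⟨[2,1,0],0⟩) q') :
    p = p' ∧ q = q' := by
  rw [g44 p hpm h1, g44 p' hpm' h1] at h
  obtain ⟨hg, hqq⟩ := M1 hq.2.1 hq'.2.1 (by simp [hpm, hpm']) hk hv h
  refine ⟨?_, hqq⟩
  have hgv : p.vals.map (· + 2) ++ [1, 0] = p'.vals.map (· + 2) ++ [1, 0] := congrArg vals hg
  have hgo := congrArg origin hg
  exact cperm_ext (List.map_injective_iff.mpr (add_inj 2)
    (List.append_inj hgv (by simp [hpm, hpm'])).1) hgo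



lemma mu_le_of_inQuadrant {r : CPerm} (hr : r.IsValid) {c i : ℕ}
    (h : InQuadrant r c i) : PatternLE (mu c) r := by
  obtain ⟨hi, hne, hcase⟩ := h
  have ho : r.origin < r.vals.length := hr.2.1
  rcases hcase with ⟨rfl, h1, h2⟩ | ⟨rfl, h1, h2⟩ | ⟨rfl, h1, h2⟩ | ⟨rfl, h1, h2⟩
  · show PatternLE ⟨[0,1], 0⟩ r
    simp [originVal, valAt] at h2
    refine ⟨fun j => if j = 0 then r.origin else i, ?_, ?_, by simp, ?_⟩
    · intro a b ha hb hab
      simp only [List.length_cons, List.length_nil] at ha hb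
      interval_cases a <;> interval_cases b <;> simp <;> omega
    · intro a ha
      simp only [List.length_cons, List.length_nil] at ha
      interval_cases a <;> simp <;> omega
    · intro a b ha hb
      simp only [List.length_cons, List.length_nil] at ha hb
      interval_cases a <;> interval_cases b <;> simp [valAt] <;> omega
  · show PatternLE ⟨[1,0], 1⟩ r
    simp [originVal, valAt] at h2
    refine ⟨fun j => if j = 0 then i else r.origin, ?_, ?_, by simp, ?_⟩
    · intro a b ha hb hab
      simp only [List.length_cons, List.length_nil] at ha hb
      interval_cases a <;> interval_cases b <;> simp <;> omega
    · intro a ha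
      simp only [List.length_cons, List.length_nil] at ha
      interval_cases a <;> simp <;> omega
    · intro a b ha hb
      simp only [List.length_cons, List.length_nil] at ha hb
      interval_cases a <;> interval_cases b <;> simp [valAt] <;> omega
  · show PatternLE ⟨[0,1], 1⟩ r
    simp [originVal, valAt] at h2
    refine ⟨fun j => if j = 0 then i else r.origin, ?_, ?_, by simp, ?_⟩
    · intro a b ha hb hab
      simp only [List.length_cons, List.length_nil] at ha hb
      interval_cases a <;> interval_cases b <;> simp <;> omega
    · intro a ha
      simp only [List.length_cons, List.length_nil] at ha
      interval_cases a <;> simp <;> omega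
    · intro a b ha hb
      simp only [List.length_cons, List.length_nil] at ha hb
      interval_cases a <;> interval_cases b <;> simp [valAt] <;> omega
  · show PatternLE ⟨[1,0], 0⟩ r
    simp [originVal, valAt] at h2
    refine ⟨fun j => if j = 0 then r.origin else i, ?_, ?_, by simp, ?_⟩
    · intro a b ha hb hab
      simp only [List.length_cons, List.length_nil] at ha hb
      interval_cases a <;> interval_cases b <;> simp <;> omega
    · intro a ha
      simp only [List.length_cons, List.length_nil] at ha
      interval_cases a <;> simp <;> omega
    · intro a b ha hb
      simp only [List.length_cons, List.length_nil] at ha hb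
      interval_cases a <;> interval_cases b <;> simp [valAt] <;> omega

lemma IsValid.nodup {r : CPerm} (hr : r.IsValid) : r.vals.Nodup :=
  (hr.2.2.nodup_iff).mpr List.nodup_range

lemma mu_valid {c : ℕ} (hc : c = 1 ∨ c = 2 ∨ c = 3 ∨ c = 4) : (mu c).IsValid := by
  rcases hc with rfl | rfl | rfl | rfl <;> exact ⟨by decide, by decide, by decide⟩

lemma quad_exists {r : CPerm} (hr : r.IsValid) {i : ℕ} (hi : i < r.vals.length)
    (hne : i ≠ r.origin) :
    ∃ c, (c = 1 ∨ c = 2 ∨ c = 3 ∨ c = 4) ∧ InQuadrant r c i := by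
  have ho : r.origin < r.vals.length := hr.2.1
  have hvne : r.valAt i ≠ r.originVal := by
    intro heq
    apply hne
    unfold originVal valAt at heq
    rw [List.getD_eq_getElem _ _ hi, List.getD_eq_getElem _ _ ho] at heq
    exact (hr.nodup.getElem_inj_iff).mp heq
  rcases Nat.lt_or_ge i r.origin with hlt | hge
  · rcases Nat.lt_or_ge (r.valAt i) r.originVal with hv | hv
    · exact ⟨3, by omega, hi, hne, by omega⟩
    · exact ⟨2, by omega, hi, hne, by omega⟩
  · have hgt : r.origin < i := by omega
    rcases Nat.lt_or_ge (r.valAt i) r.originVal with hv | hv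
    · exact ⟨4, by omega, hi, hne, by omega⟩
    · exact ⟨1, by omega, hi, hne, by omega⟩

lemma origin_eq_zero {r : CPerm} (hr : r.IsValid)
    (h : ∀ i, i < r.vals.length → i ≠ r.origin → r.origin < i) : r.origin = 0 := by
  by_contra h0
  have hl : 0 < r.vals.length := by
    have := List.length_pos_iff.mpr hr.1; omega
  have := h 0 hl (fun e => h0 e.symm)
  omega

lemma origin_eq_last {r : CPerm} (hr : r.IsValid)
    (h : ∀ i, i < r.vals.length → i ≠ r.origin → i < r.origin) :
    r.origin = r.vals.length - 1 := by
  by_contra h0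
  have ho : r.origin < r.vals.length := hr.2.1
  have := h (r.vals.length - 1) (by omega) (by omega)
  omega

lemma originVal_eq_zero {r : CPerm} (hr : r.IsValid)
    (h : ∀ i, i < r.vals.length → i ≠ r.origin → r.originVal < r.valAt i) :
    r.originVal = 0 := by
  have hl : 0 < r.vals.length := List.length_pos_iff.mpr hr.1
  have h0 : (0 : ℕ) ∈ r.vals := hr.2.2.mem_iff.mpr (List.mem_range.mpr hl)
  obtain ⟨j, hj, hjv⟩ := List.getElem_of_mem h0
  rcases eq_or_ne j r.origin with rfl | hne
  · unfold originVal valAt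
    rw [List.getD_eq_getElem _ _ hj, hjv]
  · have := h j hj hne
    unfold valAt at this
    rw [List.getD_eq_getElem _ _ hj, hjv] at this
    omega

lemma originVal_eq_last {r : CPerm} (hr : r.IsValid)
    (h : ∀ i, i < r.vals.length → i ≠ r.origin → r.valAt i < r.originVal) :
    r.originVal = r.vals.length - 1 := by
  have hl : 0 < r.vals.length := List.length_pos_iff.mpr hr.1
  have h0 : (r.vals.length - 1 : ℕ) ∈ r.vals := hr.2.2.mem_iff.mpr (List.mem_range.mpr (by omega))
  obtain ⟨j, hj, hjv⟩ := List.getElem_of_mem h0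
  rcases eq_or_ne j r.origin with rfl | hne
  · unfold originVal valAt
    rw [List.getD_eq_getElem _ _ hj, hjv]
  · have h2 := h j hj hne
    unfold valAt at h2
    rw [List.getD_eq_getElem _ _ hj, hjv] at h2
    have h3 : r.originVal < r.vals.length := by
      unfold originVal valAt
      have := hr.getD_lt hr.2.1
      exact this
    omega

lemma boxSum_length (p q : CPerm) (h : q.origin < q.vals.length) :
    (boxSum p q).vals.length = p.vals.length + q.vals.length - 1 := by
  rw [boxSum_vals]
  simp only [List.length_append, List.length_map, List.length_take, List.length_drop]
  omega

lemma count_mul_le (S : Set CPerm) (hS : IsClass S) (hbox : BoxClosed S)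
    (w : CPerm) (hw : w ∈ S) (hwl : w.vals.length = 3)
    {m n : ℕ} (hm : 1 ≤ m) (hn : 1 ≤ n)
    (INJ : ∀ p q p' q', p ∈ S → q ∈ S → p' ∈ S → q' ∈ S →
      p.vals.length = m → p'.vals.length = m → q.vals.length = n → q'.vals.length = n →
      boxSum (boxSum p w) q = boxSum (boxSum p' w) q' → p = p' ∧ q = q') :
    count S (m - 1) * count S (n - 1) ≤ count S (m + n) := by
  classical
  set A := {p | p ∈ S ∧ p.len = m - 1} with hA
  set B := {p | p ∈ S ∧ p.len = n - 1} with hB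
  set C := {p | p ∈ S ∧ p.len = m + n} with hC
  have hwo : w.origin < w.vals.length := (hS.2.1 w hw).2.1
  have lenA : ∀ p ∈ A, p.vals.length = m := by
    intro p hp
    have h1 : p.vals ≠ [] := (hS.2.1 p hp.1).1
    have h2 : p.vals.length - 1 = m - 1 := hp.2
    have := List.length_pos_iff.mpr h1
    omega
  have lenB : ∀ p ∈ B, p.vals.length = n := by
    intro p hp
    have h1 : p.vals ≠ [] := (hS.2.1 p hp.1).1
    have h2 : p.vals.length - 1 = n - 1 := hp.2
    have := List.length_pos_iff.mpr h1
    omega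
  have hmap : ∀ x ∈ A ×ˢ B, boxSum (boxSum x.1 w) x.2 ∈ C := by
    rintro ⟨p, q⟩ ⟨hp, hq⟩
    refine ⟨hbox _ (hbox _ hp.1 _ hw) _ hq.1, ?_⟩
    have hqo : q.origin < q.vals.length := (hS.2.1 q hq.1).2.1
    show (boxSum (boxSum p w) q).vals.length - 1 = m + n
    rw [boxSum_length _ _ hqo, boxSum_length _ _ hwo, lenA p hp, lenB q hq, hwl]
    omega
  have hinj : Set.InjOn (fun x : CPerm × CPerm => boxSum (boxSum x.1 w) x.2) (A ×ˢ B) := by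
    rintro ⟨p, q⟩ ⟨hp, hq⟩ ⟨p', q'⟩ ⟨hp', hq'⟩ h
    obtain ⟨h1, h2⟩ := INJ p q p' q' hp.1 hq.1 hp'.1 hq'.1
      (lenA p hp) (lenA p' hp') (lenB q hq) (lenB q' hq') h
    simp [h1, h2]
  have hCfin : C.Finite := by
    apply Set.Finite.subset (Finset.finite_toSet
      (((List.range (m+n+1)).permutations.toFinset ×ˢ Finset.range (m+n+1)).image
        (fun x => (⟨x.1, x.2⟩ : CPerm))))
    intro p hp
    have hv := hS.2.1 p hp.1
    have hL : p.vals.length = m + n + 1 := by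
      have h1 := List.length_pos_iff.mpr hv.1
      have h2 : p.vals.length - 1 = m + n := hp.2
      omega
    simp only [Finset.coe_image, Set.mem_image, Finset.mem_coe, Finset.mem_product,
      List.mem_toFinset, Finset.mem_range]
    refine ⟨(p.vals, p.origin), ⟨?_, ?_⟩, by cases p; rfl⟩
    · exact List.mem_permutations.mpr (hL ▸ hv.2.2)
    · exact hL ▸ hv.2.1
  have e1 : (A ×ˢ B).ncard = A.ncard * B.ncard := by
    rw [← Nat.card_coe_set_eq, ← Nat.card_coe_set_eq, ← Nat.card_coe_set_eq]
    rw [Nat.card_congr (Equiv.Set.prod A B), Nat.card_prod]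
  calc count S (m - 1) * count S (n - 1) = A.ncard * B.ncard := rfl
    _ = (A ×ˢ B).ncard := e1.symm
    _ = ((fun x : CPerm × CPerm => boxSum (boxSum x.1 w) x.2) '' (A ×ˢ B)).ncard :=
        (Set.ncard_image_of_injOn hinj).symm
    _ ≤ C.ncard := Set.ncard_le_ncard (by rintro _ ⟨x, hx, rfl⟩; exact hmap x hx) hCfin
    _ = count S (m + n) := rfl

end CPerm

/-- A ⊞-closed subclass of the complete pin class satisfying
the adjacency condition has `C_{m+n} ≥ C_{m−1}·C_{n−1}` for all `m, n ≥ 1`. -/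
theorem pin_subclass_supermultiplicative (S : Set CPerm) (hS : CPerm.IsClass S)
    (hbox : CPerm.BoxClosed S) (hsub : S ⊆ CompletePinClass)
    (hadj : CPerm.AdjacencyCondition S) :
    ∀ m n : ℕ, 1 ≤ m → 1 ≤ n →
      CPerm.count S (m - 1) * CPerm.count S (n - 1) ≤ CPerm.count S (m + n) := by
  intro m n hm hn
  have hvalid := hS.2.1
  rcases hadj with ⟨a, ⟨ha4, haS⟩, huniq⟩ | ⟨a, b, hab, haS, hbS⟩
  · -- single-quadrant case
    simp only [Set.mem_insert_iff, Set.mem_singleton_iff] at ha4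
    have hallquad : ∀ r ∈ S, ∀ i, i < r.vals.length → i ≠ r.origin → CPerm.InQuadrant r a i := by
      intro r hrS i hi hne
      obtain ⟨c, hc4, hcq⟩ := CPerm.quad_exists (hvalid r hrS) hi hne
      have hmuc : CPerm.mu c ∈ S :=
        hS.2.2 _ r hrS (CPerm.mu_valid hc4) (CPerm.mu_le_of_inQuadrant (hvalid r hrS) hcq)
      have hca : c = a := huniq c ⟨by rcases hc4 with rfl | rfl | rfl | rfl <;> simp, hmuc⟩
      exact hca ▸ hcq
    rcases ha4 with rfl | rfl | rfl | rfl
    · have hfacts : ∀ r ∈ S, r.origin = 0 ∧ r.originVal = 0 := by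
        intro r hrS
        refine ⟨CPerm.origin_eq_zero (hvalid r hrS) ?_, CPerm.originVal_eq_zero (hvalid r hrS) ?_⟩
        · intro i hi hne
          rcases (hallquad r hrS i hi hne).2.2 with ⟨_, h4, _⟩ | ⟨h4, _⟩ | ⟨h4, _⟩ | ⟨h4, _⟩ <;> omega
        · intro i hi hne
          rcases (hallquad r hrS i hi hne).2.2 with ⟨_, _, h4⟩ | ⟨h4, _⟩ | ⟨h4, _⟩ | ⟨h4, _⟩ <;> omega
      have hwe : CPerm.boxSum (CPerm.mu 1) (CPerm.mu 1) = ⟨[0,1,2],0⟩ := by decide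
      apply CPerm.count_mul_le S hS hbox _ (hbox _ haS _ haS) (by rw [hwe]; rfl) hm hn
      intro p q p' q' hpS hqS hpS' hqS' hpm hpm' hqn hqn' h
      rw [hwe] at h
      exact CPerm.INJ_s1 hm (hvalid q hqS) (hvalid q' hqS') hpm hpm'
        (by have := (hfacts q hqS).1; have := (hfacts q' hqS').1; omega)
        (by have := (hfacts q hqS).2; have := (hfacts q' hqS').2; omega) h
    · have hfacts : ∀ r ∈ S, r.origin = r.vals.length - 1 ∧ r.originVal = 0 := by
        intro r hrS
        refine ⟨CPerm.origin_eq_last (hvalid r hrS) ?_, CPerm.originVal_eq_zero (hvalid r hrS) ?_⟩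
        · intro i hi hne
          rcases (hallquad r hrS i hi hne).2.2 with ⟨h4, _⟩ | ⟨_, h4, _⟩ | ⟨h4, _⟩ | ⟨h4, _⟩ <;> omega
        · intro i hi hne
          rcases (hallquad r hrS i hi hne).2.2 with ⟨h4, _⟩ | ⟨_, _, h4⟩ | ⟨h4, _⟩ | ⟨h4, _⟩ <;> omega
      have hwe : CPerm.boxSum (CPerm.mu 2) (CPerm.mu 2) = ⟨[2,1,0],2⟩ := by decide
      apply CPerm.count_mul_le S hS hbox _ (hbox _ haS _ haS) (by rw [hwe]; rfl) hm hn
      intro p q p' q' hpS hqS hpS' hqS' hpm hpm' hqn hqn' h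
      rw [hwe] at h
      exact CPerm.INJ_s2 hm (hvalid q hqS) (hvalid q' hqS') hpm hpm'
        (by have := (hfacts q hqS).1; have := (hfacts q' hqS').1; omega)
        (by have := (hfacts q hqS).2; have := (hfacts q' hqS').2; omega) h
    · have hfacts : ∀ r ∈ S, r.origin = r.vals.length - 1 ∧ r.originVal = r.vals.length - 1 := by
        intro r hrS
        refine ⟨CPerm.origin_eq_last (hvalid r hrS) ?_, CPerm.originVal_eq_last (hvalid r hrS) ?_⟩
        · intro i hi hne
          rcases (hallquad r hrS i hi hne).2.2 with ⟨h4, _⟩ | ⟨h4, _⟩ | ⟨_, h4, _⟩ | ⟨h4, _⟩ <;> omega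
        · intro i hi hne
          rcases (hallquad r hrS i hi hne).2.2 with ⟨h4, _⟩ | ⟨h4, _⟩ | ⟨_, _, h4⟩ | ⟨h4, _⟩ <;> omega
      have hwe : CPerm.boxSum (CPerm.mu 3) (CPerm.mu 3) = ⟨[0,1,2],2⟩ := by decide
      apply CPerm.count_mul_le S hS hbox _ (hbox _ haS _ haS) (by rw [hwe]; rfl) hm hn
      intro p q p' q' hpS hqS hpS' hqS' hpm hpm' hqn hqn' h
      rw [hwe] at h
      exact CPerm.INJ_s3 hm (hvalid q hqS) (hvalid q' hqS') hpm hpm'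
        (by have := (hfacts q hqS).1; have := (hfacts q' hqS').1; omega)
        (by have := (hfacts q hqS).2; have := (hfacts q' hqS').2; omega) h
    · have hfacts : ∀ r ∈ S, r.origin = 0 ∧ r.originVal = r.vals.length - 1 := by
        intro r hrS
        refine ⟨CPerm.origin_eq_zero (hvalid r hrS) ?_, CPerm.originVal_eq_last (hvalid r hrS) ?_⟩
        · intro i hi hne
          rcases (hallquad r hrS i hi hne).2.2 with ⟨h4, _⟩ | ⟨h4, _⟩ | ⟨h4, _⟩ | ⟨_, h4, _⟩ <;> omega
        · intro i hi hne
          rcases (hallquad r hrS i hi hne).2.2 with ⟨h4, _⟩ | ⟨h4, _⟩ | ⟨h4, _⟩ | ⟨_, _, h4⟩ <;> omega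
      have hwe : CPerm.boxSum (CPerm.mu 4) (CPerm.mu 4) = ⟨[2,1,0],0⟩ := by decide
      apply CPerm.count_mul_le S hS hbox _ (hbox _ haS _ haS) (by rw [hwe]; rfl) hm hn
      intro p q p' q' hpS hqS hpS' hqS' hpm hpm' hqn hqn' h
      rw [hwe] at h
      exact CPerm.INJ_s4 hm (hvalid q hqS) (hvalid q' hqS') hpm hpm'
        (by have := (hfacts q hqS).1; have := (hfacts q' hqS').1; omega)
        (by have := (hfacts q hqS).2; have := (hfacts q' hqS').2; omega) h
  · -- adjacent-pair case
    rcases hab with h8 | h8 | h8 | h8 | h8 | h8 | h8 | h8 <;>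
      (simp only [Prod.mk.injEq] at h8; obtain ⟨rfl, rfl⟩ := h8)
    · have hwe : CPerm.boxSum (CPerm.mu 1) (CPerm.mu 2) = ⟨[2,0,1],1⟩ := by decide
      apply CPerm.count_mul_le S hS hbox _ (hbox _ haS _ hbS) (by rw [hwe]; rfl) hm hn
      intro p q p' q' hpS hqS hpS' hqS' hpm hpm' hqn hqn' h
      rw [hwe] at h
      exact CPerm.INJ_12 hm (hvalid p hpS) (hvalid p' hpS') (hvalid q hqS) (hvalid q' hqS')
        hpm hpm' h
    · have hwe : CPerm.boxSum (CPerm.mu 2) (CPerm.mu 3) = ⟨[0,2,1],2⟩ := by decide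
      apply CPerm.count_mul_le S hS hbox _ (hbox _ haS _ hbS) (by rw [hwe]; rfl) hm hn
      intro p q p' q' hpS hqS hpS' hqS' hpm hpm' hqn hqn' h
      rw [hwe] at h
      exact CPerm.INJ_23 hm (hvalid p hpS) (hvalid p' hpS') (hvalid q hqS) (hvalid q' hqS')
        hpm hpm' h
    · have hwe : CPerm.boxSum (CPerm.mu 4) (CPerm.mu 3) = ⟨[0,2,1],1⟩ := by decide
      apply CPerm.count_mul_le S hS hbox _ (hbox _ hbS _ haS) (by rw [hwe]; rfl) hm hn
      intro p q p' q' hpS hqS hpS' hqS' hpm hpm' hqn hqn' h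
      rw [hwe] at h
      exact CPerm.INJ_43 hm (hvalid p hpS) (hvalid p' hpS') (hvalid q hqS) (hvalid q' hqS')
        hpm hpm' h
    · have hwe : CPerm.boxSum (CPerm.mu 4) (CPerm.mu 1) = ⟨[1,0,2],0⟩ := by decide
      apply CPerm.count_mul_le S hS hbox _ (hbox _ haS _ hbS) (by rw [hwe]; rfl) hm hn
      intro p q p' q' hpS hqS hpS' hqS' hpm hpm' hqn hqn' h
      rw [hwe] at h
      exact CPerm.INJ_41 hm (hvalid p hpS) (hvalid p' hpS') (hvalid q hqS) (hvalid q' hqS')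
        hpm hpm' h
    · have hwe : CPerm.boxSum (CPerm.mu 1) (CPerm.mu 2) = ⟨[2,0,1],1⟩ := by decide
      apply CPerm.count_mul_le S hS hbox _ (hbox _ hbS _ haS) (by rw [hwe]; rfl) hm hn
      intro p q p' q' hpS hqS hpS' hqS' hpm hpm' hqn hqn' h
      rw [hwe] at h
      exact CPerm.INJ_12 hm (hvalid p hpS) (hvalid p' hpS') (hvalid q hqS) (hvalid q' hqS')
        hpm hpm' h
    · have hwe : CPerm.boxSum (CPerm.mu 2) (CPerm.mu 3) = ⟨[0,2,1],2⟩ := by decide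
      apply CPerm.count_mul_le S hS hbox _ (hbox _ hbS _ haS) (by rw [hwe]; rfl) hm hn
      intro p q p' q' hpS hqS hpS' hqS' hpm hpm' hqn hqn' h
      rw [hwe] at h
      exact CPerm.INJ_23 hm (hvalid p hpS) (hvalid p' hpS') (hvalid q hqS) (hvalid q' hqS')
        hpm hpm' h
    · have hwe : CPerm.boxSum (CPerm.mu 4) (CPerm.mu 3) = ⟨[0,2,1],1⟩ := by decide
      apply CPerm.count_mul_le S hS hbox _ (hbox _ haS _ hbS) (by rw [hwe]; rfl) hm hn
      intro p q p' q' hpS hqS hpS' hqS' hpm hpm' hqn hqn' h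
      rw [hwe] at h
      exact CPerm.INJ_43 hm (hvalid p hpS) (hvalid p' hpS') (hvalid q hqS) (hvalid q' hqS')
        hpm hpm' h
    · have hwe : CPerm.boxSum (CPerm.mu 4) (CPerm.mu 1) = ⟨[1,0,2],0⟩ := by decide
      apply CPerm.count_mul_le S hS hbox _ (hbox _ hbS _ haS) (by rw [hwe]; rfl) hm hn
      intro p q p' q' hpS hqS hpS' hqS' hpm hpm' hqn hqn' h
      rw [hwe] at h
      exact CPerm.INJ_41 hm (hvalid p hpS) (hvalid p' hpS') (hvalid q hqS) (hvalid q' hqS')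
        hpm hpm' h
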